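/- arXiv:2605.31063 — 5 statements merged into one kernel-verified Lean document; each statement's English description precedes it below -/
import Mathlib

section
/- Let $V$ be a finite type and let $L$ be a linear operator on functions $f : V \to \mathbb{R}$ given by a matrix: $(Lf)(i) = \sum_j M(i,j) f(j)$, with adjoint $(L^\dagger p)(i) = \sum_j M(j,i) p(j)$. For strictly positive functions $p, q : V \to \mathbb{R}_{>0}$ define the reversal $R_p(L)$ by $(R_p(L) f)(x) = p(x)^{-1} (L^\dagger (p \cdot f))(x) - p(x)^{-1} (L^\dagger p)(x) f(x)$ and the Doob transform $H_h(L)$ by $(H_h(L) f)(x) = h(x)^{-1} (L(h \cdot f))(x) - h(x)^{-1} (L h)(x) f(x)$. Then $R_p(R_q(L)) = H_{p/q}(L)$, where $p/q$ denotes the pointwise quotient. -/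
open Finset

variable {V : Type*}

/-- The adjoint (with respect to counting measure) of an operator on `ℝ^V`
given in matrix form: if `T f i = ∑ j, M i j * f j` then
`adjOp T f i = ∑ j, M j i * f j`. -/
noncomputable def adjOp [Fintype V] [DecidableEq V]
    (T : (V → ℝ) → (V → ℝ)) : (V → ℝ) → (V → ℝ) :=
  fun f i => ∑ j, T (Pi.single i 1) j * f j

/-- The reversal of a generator `T` with respect to a (positive) function `p`:
`(R_p(T) f)(x) = p(x)⁻¹ (T†(p·f))(x) − p(x)⁻¹ (T† p)(x) f(x)`. -/
noncomputable def Rev [Fintype V] [DecidableEq V]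
    (p : V → ℝ) (T : (V → ℝ) → (V → ℝ)) : (V → ℝ) → (V → ℝ) :=
  fun f x => (p x)⁻¹ * adjOp T (fun y => p y * f y) x - (p x)⁻¹ * adjOp T p x * f x

/-- The generalized Doob `h`-transform of a generator `T`:
`(H_h(T) f)(x) = h(x)⁻¹ (T(h·f))(x) − h(x)⁻¹ (T h)(x) f(x)`. -/
noncomputable def Doob (h : V → ℝ) (T : (V → ℝ) → (V → ℝ)) : (V → ℝ) → (V → ℝ) :=
  fun f x => (h x)⁻¹ * T (fun y => h y * f y) x - (h x)⁻¹ * T h x * f x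

lemma adjOp_matrix [Fintype V] [DecidableEq V] (M : Matrix V V ℝ) (f : V → ℝ) (i : V) :
    adjOp (fun f i => ∑ j, M i j * f j) f i = ∑ j, M j i * f j := by
  simp [adjOp, Pi.single_apply, mul_ite]

lemma rev_matrix [Fintype V] [DecidableEq V] (M : Matrix V V ℝ) (q f : V → ℝ) (x : V) :
    Rev q (fun f i => ∑ j, M i j * f j) f x =
      (q x)⁻¹ * ∑ j, M j x * (q j * f j) - (q x)⁻¹ * (∑ j, M j x * q j) * f x := by
  simp [Rev, adjOp_matrix]

lemma adjOp_rev [Fintype V] [DecidableEq V] (M : Matrix V V ℝ) (q f : V → ℝ) (i : V) :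
    adjOp (Rev q (fun f i => ∑ j, M i j * f j)) f i =
      (∑ j, (q j)⁻¹ * q i * M i j * f j) - (q i)⁻¹ * (∑ k, M k i * q k) * f i := by
  unfold adjOp
  simp only [rev_matrix, Pi.single_apply, mul_ite, mul_one, mul_zero,
    Finset.sum_ite_eq, Finset.sum_ite_eq', Finset.mem_univ, if_true, sub_mul,
    Finset.sum_sub_distrib, ite_mul, zero_mul]
  congr 1
  exact Finset.sum_congr rfl fun j _ => by ring

/-- Double reversal is a Doob transform: `R_p(R_q(L)) = H_{p/q}(L)` for an
operator `L` given by a matrix `M`. -/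
theorem stmt_3 [Fintype V] [DecidableEq V] (M : Matrix V V ℝ)
    (p q : V → ℝ) (hp : ∀ x, 0 < p x) (hq : ∀ x, 0 < q x) :
    Rev p (Rev q (fun f i => ∑ j, M i j * f j)) =
      Doob (fun x => p x / q x) (fun f i => ∑ j, M i j * f j) := by
  funext f x
  simp only [Rev, Doob, adjOp_rev]
  have hpx := (hp x).ne'
  have hqx := (hq x).ne'
  have e1 : ∑ j, (q j)⁻¹ * q x * M x j * (p j * f j)
      = q x * ∑ j, M x j * (p j / q j * f j) := by
    rw [Finset.mul_sum]
    exact Finset.sum_congr rfl fun j _ => by field_simp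
  have e2 : ∑ j, (q j)⁻¹ * q x * M x j * p j
      = q x * ∑ j, M x j * (p j / q j) := by
    rw [Finset.mul_sum]
    exact Finset.sum_congr rfl fun j _ => by field_simp
  rw [e1, e2]
  set A := ∑ j, M x j * (p j / q j * f j)
  set B := ∑ j, M x j * (p j / q j)
  set S := ∑ k, M k x * q k
  field_simp
  ring
end

section
/- Let $V$ be finite, $L$ a linear operator on $\mathbb{R}^V$ with $L\mathbf{1} = 0$ (zero row sums), and $h, \pi : V \to \mathbb{R}_{>0}$ strictly positive functions depending smoothly on $t \in [0,1]$. Set $\rho_t = h_t \pi_t$ (pointwise product). Then $\partial_t \rho_t = (L_t^{h_t})^\dagger \rho_t$ holds at every point if and only if $h_t^{-1}(\partial_t h_t + L_t h_t) = \pi_t^{-1}(L_t^\dagger \pi_t - \partial_t \pi_t)$ pointwise, where $L_t^{h}$ is the Doob transform $(L^h f)(x) = h(x)^{-1}(L(hf))(x) - h(x)^{-1}(Lh)(x)f(x)$. -/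
open Finset

variable {V : Type*}

/-!
The transform conjugates `T` by multiplication with `h`, so testing its adjoint against
`ρ = h π` gives `(T^h)†(h π) = h T†π − (T h) π`. As `∂ρ = h' π + h π'`, the forward equation
reads `h' π + h π' = h T†π − (T h) π`, and dividing by `h π` gives the stated identity.
-/

theorem HasDerivAt.hasDerivAt_iff_eq {𝕜 F : Type*} [NontriviallyNormedField 𝕜]
    [NormedAddCommGroup F] [NormedSpace 𝕜 F] {f : 𝕜 → F} {f' g : F} {x : 𝕜}
    (hf : HasDerivAt f f' x) :
    HasDerivAt f g x ↔ g = f' :=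
  ⟨fun hg => hg.unique hf, fun hg => hg ▸ hf⟩

theorem mul_pi_single_eq_smul {R : Type*} [MulZeroOneClass R] [DecidableEq V] (h : V → R)
    (x : V) : (fun y => h y * (Pi.single x 1 : V → R) y) = h x • (Pi.single x 1 : V → R) := by
  funext y
  by_cases hy : y = x
  · subst hy; simp
  · simp [Pi.single_eq_of_ne hy]

theorem adjOp_doob_mul [Fintype V] [DecidableEq V] (T : (V → ℝ) →ₗ[ℝ] (V → ℝ))
    {h : V → ℝ} (hh : ∀ x, h x ≠ 0) (p : V → ℝ) (x : V) :
    adjOp (Doob h T) (fun y => h y * p y) x = h x * adjOp T p x - T h x * p x := by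
  have hterm : ∀ j, Doob h T (Pi.single x 1) j * (h j * p j) =
      h x * (T (Pi.single x 1) j * p j) - (Pi.single x 1 : V → ℝ) j * (T h j * p j) := by
    intro j
    simp only [Doob, mul_pi_single_eq_smul, map_smul, Pi.smul_apply, smul_eq_mul]
    field_simp [hh j]
  simp only [adjOp, hterm, sum_sub_distrib, ← mul_sum]
  simp [Pi.single_apply]

theorem stmt_8_general [Fintype V] [DecidableEq V]
    (L : ℝ → (V → ℝ) →ₗ[ℝ] (V → ℝ))
    (h π h' π' : ℝ → V → ℝ)
    (hpos : ∀ t x, 0 < h t x) (πpos : ∀ t x, 0 < π t x)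
    (hd : ∀ t x, HasDerivAt (fun s => h s x) (h' t x) t)
    (πd : ∀ t x, HasDerivAt (fun s => π s x) (π' t x) t)
    (t : ℝ) :
    ((∀ x, HasDerivAt (fun s => h s x * π s x)
        (adjOp (Doob (h t) ⇑(L t)) (fun y => h t y * π t y) x) t) ↔
      (∀ x, (h t x)⁻¹ * (h' t x + L t (h t) x) =
        (π t x)⁻¹ * (adjOp ⇑(L t) (π t) x - π' t x))) := by
  refine forall_congr' fun x => ?_
  have hx := (hpos t x).ne'
  have πx := (πpos t x).ne'
  rw [((hd t x).fun_mul (πd t x)).hasDerivAt_iff_eq, adjOp_doob_mul (L t) (fun y => (hpos t y).ne')]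
  field_simp
  constructor <;> intro H <;> linear_combination -H

/-- Marginal prescription for the generalized Doob `h`-transform: with
`ρ_t = h_t π_t`, the forward equation `∂_t ρ_t = (L_t^{h_t})† ρ_t` holds at `t`
if and only if `h_t⁻¹(∂_t h_t + L_t h_t) = π_t⁻¹(L_t† π_t − ∂_t π_t)` pointwise. -/
theorem stmt_8 [Fintype V] [DecidableEq V]
    (L : ℝ → (V → ℝ) →ₗ[ℝ] (V → ℝ))
    (hL1 : ∀ t, L t (fun _ => 1) = 0)
    (h π h' π' : ℝ → V → ℝ)
    (hpos : ∀ t x, 0 < h t x) (πpos : ∀ t x, 0 < π t x)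
    (hd : ∀ t x, HasDerivAt (fun s => h s x) (h' t x) t)
    (πd : ∀ t x, HasDerivAt (fun s => π s x) (π' t x) t)
    (t : ℝ) (ht : t ∈ Set.Icc (0 : ℝ) 1) :
    ((∀ x, HasDerivAt (fun s => h s x * π s x)
        (adjOp (Doob (h t) ⇑(L t)) (fun y => h t y * π t y) x) t) ↔
      (∀ x, (h t x)⁻¹ * (h' t x + L t (h t) x) =
        (π t x)⁻¹ * (adjOp ⇑(L t) (π t) x - π' t x))) :=
  stmt_8_general L h π h' π' hpos πpos hd πd t
end

section
/- Let $V$ be a finite set, let $\pi_0, \ldots, \pi_N$ be strictly positive probability distributions on $V$ with unnormalized versions $\gamma_n = Z_n \pi_n$, and let $P_{F,1}, \ldots, P_{F,N}$ be Markov kernels with strictly positive pushforwards $P_{F,n}\#\pi_{n-1}$. Define backward kernels $P_{B,n}(x \mid y) = \pi_{n-1}(x)P_{F,n}(x,y)/(P_{F,n}\#\pi_{n-1})(y)$ and the work $W(x_{0:N}) = \sum_{n=1}^N [\log(\gamma_{n-1}(x_n)/\gamma_n(x_n)) + \log((P_{F,n}\#\pi_{n-1})(x_n)/\pi_{n-1}(x_n))]$.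 Then for every path $(x_0, \ldots, x_N)$ with $\prod_n P_{F,n}(x_{n-1},x_n) > 0$, the path-probability ratio satisfies $\frac{\pi_N(x_N)\prod_{n=1}^N P_{B,n}(x_{n-1}\mid x_n)}{\pi_0(x_0)\prod_{n=1}^N P_{F,n}(x_n \mid x_{n-1})} = \exp(-W(x_{0:N}) + \Delta F)$, where $\Delta F = -\log(Z_N/Z_0)$. -/
/-!
Telescoping `π_N(x_N) ∏ π_{n-1}(x_{n-1}) = π_0(x_0) ∏ π_n(x_n)` shows that the path-probability
ratio equals `∏ₙ π_n(x_n) / (P_{F,n}#π_{n-1})(x_n)`. On the other side, the `n`-th work term is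
`log (Z_{n-1} (P_{F,n}#π_{n-1})(x_n) / γ_n(x_n))`, so `exp (-W)` is the same product times
`∏ₙ Z_n / Z_{n-1} = Z_N / Z_0`, which `exp ΔF` cancels.
-/

open Finset

theorem Fin.last_mul_prod_castSucc {M : Type*} [CommMonoid M] {N : ℕ} (f : Fin (N + 1) → M) :
    f (Fin.last N) * ∏ n : Fin N, f n.castSucc = f 0 * ∏ n : Fin N, f n.succ := by
  rw [mul_comm, ← Fin.prod_univ_castSucc, Fin.prod_univ_succ]

theorem Fin.prod_succ_div_castSucc {G : Type*} [CommGroupWithZero G] {N : ℕ}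
    {f : Fin (N + 1) → G} (hf : ∀ n, f n ≠ 0) :
    ∏ n : Fin N, f n.succ / f n.castSucc = f (Fin.last N) / f 0 := by
  have hprod : ∏ n : Fin N, f n.castSucc ≠ 0 := prod_ne_zero_iff.mpr fun n _ => hf _
  rw [prod_div_distrib, div_eq_div_iff hprod (hf 0), mul_comm, ← Fin.last_mul_prod_castSucc]

theorem prod_backward_div_prod_forward {K : Type*} [Field K] {N : ℕ} (r : Fin (N + 1) → K)
    (f q : Fin N → K) (hr : r 0 ≠ 0) (hf : ∏ n, f n ≠ 0) :
    (r (Fin.last N) * ∏ n, r n.castSucc * f n / q n) / (r 0 * ∏ n, f n) =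
      ∏ n, r n.succ / q n := by
  rw [prod_div_distrib, prod_mul_distrib, prod_div_distrib, ← mul_div_assoc, ← mul_assoc,
    Fin.last_mul_prod_castSucc]
  field_simp

theorem Real.exp_neg_log_div_add_log_div {a b Z₀ Z₁ q : ℝ} (ha : 0 < a) (hb : 0 < b)
    (hZ₀ : 0 < Z₀) (hZ₁ : 0 < Z₁) (hq : 0 < q) :
    Real.exp (-(Real.log (a / b) + Real.log (q / (a / Z₀)))) = Z₁ / Z₀ * (b / Z₁ / q) := by
  rw [Real.exp_neg, Real.exp_add, Real.exp_log (by positivity), Real.exp_log (by positivity)]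
  field_simp

theorem stmt_10_general {V : Type*} [Fintype V] (N : ℕ)
    (γ : Fin (N + 1) → V → ℝ) (hγ : ∀ n x, 0 < γ n x)
    (PF : Fin N → V → V → ℝ)
    (hpush : ∀ (n : Fin N) (y : V),
      0 < ∑ v, (γ n.castSucc v / ∑ w, γ n.castSucc w) * PF n v y)
    (x : Fin (N + 1) → V)
    (hpath : 0 < ∏ n : Fin N, PF n (x n.castSucc) (x n.succ)) :
    let Z : Fin (N + 1) → ℝ := fun n => ∑ v, γ n v
    let π : Fin (N + 1) → V → ℝ := fun n v => γ n v / Z n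
    let push : Fin N → V → ℝ := fun n y => ∑ v, π n.castSucc v * PF n v y
    let PB : Fin N → V → V → ℝ := fun n a b => π n.castSucc a * PF n a b / push n b
    let W : ℝ := ∑ n : Fin N,
      (Real.log (γ n.castSucc (x n.succ) / γ n.succ (x n.succ)) +
        Real.log (push n (x n.succ) / π n.castSucc (x n.succ)))
    (π (Fin.last N) (x (Fin.last N)) * ∏ n : Fin N, PB n (x n.castSucc) (x n.succ)) /
        (π 0 (x 0) * ∏ n : Fin N, PF n (x n.castSucc) (x n.succ)) =
      Real.exp (-W + -Real.log (Z (Fin.last N) / Z 0)) := by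
  intro Z π push PB W
  have hZ : ∀ n, 0 < Z n := fun n => sum_pos (fun v _ => hγ n v) ⟨x 0, mem_univ _⟩
  have hπ : ∀ n v, 0 < π n v := fun n v => div_pos (hγ n v) (hZ n)
  have hexp_W : Real.exp (-W) =
      Z (Fin.last N) / Z 0 * ∏ n : Fin N, π n.succ (x n.succ) / push n (x n.succ) := by
    rw [← Fin.prod_succ_div_castSucc (fun n => (hZ n).ne'), ← prod_mul_distrib,
      ← sum_neg_distrib, Real.exp_sum]
    exact prod_congr rfl fun n _ => Real.exp_neg_log_div_add_log_div (hγ _ _) (hγ _ _)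
      (hZ _) (hZ _) (hpush n _)
  rw [Real.exp_add, hexp_W, Real.exp_neg, Real.exp_log (div_pos (hZ _) (hZ 0)),
    prod_backward_div_prod_forward (fun n => π n (x n)) _ _ (hπ 0 (x 0)).ne' hpath.ne']
  rw [mul_comm, inv_mul_cancel_left₀ (div_pos (hZ _) (hZ 0)).ne']

/-- Discrete-time Crooks fluctuation theorem on a finite state space. -/
theorem stmt_10 {V : Type*} [Fintype V] (N : ℕ)
    (γ : Fin (N + 1) → V → ℝ) (hγ : ∀ n x, 0 < γ n x)
    (PF : Fin N → V → V → ℝ) (hPF0 : ∀ n x y, 0 ≤ PF n x y)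
    (hPFrow : ∀ n x, ∑ y, PF n x y = 1)
    (hpush : ∀ (n : Fin N) (y : V),
      0 < ∑ v, (γ n.castSucc v / ∑ w, γ n.castSucc w) * PF n v y)
    (x : Fin (N + 1) → V)
    (hpath : 0 < ∏ n : Fin N, PF n (x n.castSucc) (x n.succ)) :
    let Z : Fin (N + 1) → ℝ := fun n => ∑ v, γ n v
    let π : Fin (N + 1) → V → ℝ := fun n v => γ n v / Z n
    let push : Fin N → V → ℝ := fun n y => ∑ v, π n.castSucc v * PF n v y
    let PB : Fin N → V → V → ℝ := fun n a b => π n.castSucc a * PF n a b / push n b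
    let W : ℝ := ∑ n : Fin N,
      (Real.log (γ n.castSucc (x n.succ) / γ n.succ (x n.succ)) +
        Real.log (push n (x n.succ) / π n.castSucc (x n.succ)))
    (π (Fin.last N) (x (Fin.last N)) * ∏ n : Fin N, PB n (x n.castSucc) (x n.succ)) /
        (π 0 (x 0) * ∏ n : Fin N, PF n (x n.castSucc) (x n.succ)) =
      Real.exp (-W + -Real.log (Z (Fin.last N) / Z 0)) :=
  stmt_10_general N γ hγ PF hpush x hpath
end

section
/- In the setting of the discrete-time Crooks relation on a finite set $V$ (strictly positive distributions $\pi_0,\ldots,\pi_N$ with unnormalized versions $\gamma_n = Z_n\pi_n$, forward kernels $P_{F,n}$ with strictly positive pushforwards, work $W$ as defined there), the discrete-time Jarzynski equality holds: $\mathbb{E}_{\vec{P}}[\exp(-W(X_{0:N}))] = Z_N/Z_0$, where $\vec{P}$ is the forward path distribution $X_0 \sim \pi_0$, $X_n \mid X_{n-1} \sim P_{F,n}(\cdot \mid X_{n-1})$. -/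
/-!
The increment of the work at step `n` satisfies
`exp (-wₙ(y)) = γₙ(y) / ∑ᵥ γₙ₋₁(v) P_{F,n}(v, y)`, so multiplying `P_{F,n}` by `exp (-wₙ)` gives a
(non-stochastic) kernel that carries `γₙ₋₁` exactly to `γₙ`. Summing the reweighted path weights
step by step therefore turns `γ₀` into `γ_N`, and the expectation equals `Z_N / Z₀`.
-/

open Finset

theorem sum_path_weight_eq_sum_last {R V : Type*} [CommSemiring R] [Fintype V] :
    ∀ {N : ℕ} (μ : Fin (N + 1) → V → R) (g : Fin N → V → V → R),
      (∀ n y, ∑ v, μ n.castSucc v * g n v y = μ n.succ y) →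
      ∑ x : Fin (N + 1) → V, μ 0 (x 0) * ∏ n, g n (x n.castSucc) (x n.succ) =
        ∑ v, μ (Fin.last N) v
  | 0, μ, g, _ => by
    rw [← (Equiv.funUnique (Fin 1) V).symm.sum_comp]
    simp
  | N + 1, μ, g, hμ => by
    have hμ₀ : ∀ y, ∑ v, μ 0 v * g 0 v y = μ (Fin.succ 0) y := hμ 0
    rw [← (Fin.consEquiv fun _ => V).sum_comp, Fintype.sum_prod_type, sum_comm]
    simp only [Fin.consEquiv_apply, Fin.prod_univ_succ, Fin.cons_zero, Fin.castSucc_zero,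
      Fin.cons_succ, ← Fin.succ_castSucc, ← mul_assoc, ← sum_mul, hμ₀]
    rw [← Fin.succ_last]
    exact sum_path_weight_eq_sum_last (fun n => μ n.succ) (fun n => g n.succ)
      fun n y => by simpa only [Fin.succ_castSucc] using hμ n.succ y

section Reweighting

variable {K V : Type*} [Semifield K] [Fintype V]

theorem sum_div_sum_mul (γ : V → K) (P : V → V → K) (y : V) :
    ∑ v, γ v / (∑ w, γ w) * P v y = (∑ v, γ v * P v y) / ∑ w, γ w := by
  rw [sum_div]
  exact sum_congr rfl fun v _ => div_mul_eq_mul_div _ _ _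

def reweightKernel (μ ν : V → K) (P : V → V → K) (v y : V) : K :=
  P v y * (ν y / ∑ w, μ w * P w y)

theorem sum_mul_reweightKernel {μ ν : V → K} {P : V → V → K} {y : V}
    (hy : ∑ w, μ w * P w y ≠ 0) : ∑ v, μ v * reweightKernel μ ν P v y = ν y := by
  simp only [reweightKernel, ← mul_assoc, ← sum_mul]
  exact mul_div_cancel₀ _ hy

end Reweighting

theorem exp_neg_log_div_add_log_pushforward_div {V : Type*} [Fintype V] {γ₀ γ₁ : V → ℝ}
    {P : V → V → ℝ} {y : V} (hγ₀ : ∀ v, 0 < γ₀ v) (hγ₁ : 0 < γ₁ y)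
    (hS : 0 < ∑ v, γ₀ v * P v y) :
    Real.exp (-(Real.log (γ₀ y / γ₁ y) +
        Real.log ((∑ v, γ₀ v / (∑ w, γ₀ w) * P v y) / (γ₀ y / ∑ w, γ₀ w)))) =
      γ₁ y / ∑ v, γ₀ v * P v y := by
  have hZ : 0 < ∑ w, γ₀ w := sum_pos (fun v _ => hγ₀ v) ⟨y, mem_univ y⟩
  have hratio : 0 < γ₀ y / γ₁ y := div_pos (hγ₀ y) hγ₁
  have hlikelihood : 0 < (∑ v, γ₀ v * P v y) / (∑ w, γ₀ w) / (γ₀ y / ∑ w, γ₀ w) :=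
    div_pos (div_pos hS hZ) (div_pos (hγ₀ y) hZ)
  rw [sum_div_sum_mul, ← Real.log_mul hratio.ne' hlikelihood.ne', Real.exp_neg,
    Real.exp_log (mul_pos hratio hlikelihood)]
  have hγ₀y := (hγ₀ y).ne'
  field_simp

theorem stmt_11_general {V : Type*} [Fintype V] (N : ℕ)
    (γ : Fin (N + 1) → V → ℝ) (hγ : ∀ n x, 0 < γ n x)
    (PF : Fin N → V → V → ℝ)
    (hpush : ∀ (n : Fin N) (y : V),
      0 < ∑ v, (γ n.castSucc v / ∑ w, γ n.castSucc w) * PF n v y) :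
    let Z : Fin (N + 1) → ℝ := fun n => ∑ v, γ n v
    let π : Fin (N + 1) → V → ℝ := fun n v => γ n v / Z n
    let push : Fin N → V → ℝ := fun n y => ∑ v, π n.castSucc v * PF n v y
    let W : (Fin (N + 1) → V) → ℝ := fun x => ∑ n : Fin N,
      (Real.log (γ n.castSucc (x n.succ) / γ n.succ (x n.succ)) +
        Real.log (push n (x n.succ) / π n.castSucc (x n.succ)))
    (∑ x : Fin (N + 1) → V,
        (π 0 (x 0) * ∏ n : Fin N, PF n (x n.castSucc) (x n.succ)) *
          Real.exp (-W x)) = Z (Fin.last N) / Z 0 := by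
  intro Z π push W
  have hS : ∀ n y, 0 < ∑ v, γ n.castSucc v * PF n v y := fun n y => by
    have hZ : 0 < ∑ w, γ n.castSucc w := sum_pos (fun v _ => hγ _ v) ⟨y, mem_univ y⟩
    simpa only [sum_div_sum_mul, div_pos_iff_of_pos_right hZ] using hpush n y
  have hexpW : ∀ x : Fin (N + 1) → V, Real.exp (-W x) =
      ∏ n : Fin N, γ n.succ (x n.succ) / ∑ v, γ n.castSucc v * PF n v (x n.succ) := fun x => by
    rw [← sum_neg_distrib, Real.exp_sum]
    exact prod_congr rfl fun n _ =>
      exp_neg_log_div_add_log_pushforward_div (hγ _) (hγ _ _) (hS n _)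
  calc _ = (∑ x : Fin (N + 1) → V, γ 0 (x 0) *
          ∏ n, reweightKernel (γ n.castSucc) (γ n.succ) (PF n) (x n.castSucc) (x n.succ)) / Z 0 := by
        rw [sum_div]
        refine sum_congr rfl fun x _ => ?_
        simp only [hexpW, π, reweightKernel, prod_mul_distrib]
        ring
    _ = Z (Fin.last N) / Z 0 := by
        rw [sum_path_weight_eq_sum_last]
        exact fun n y => sum_mul_reweightKernel (hS n y).ne'

/-- Discrete-time Jarzynski equality on a finite state space:
`𝔼_{forward path law}[exp(−W)] = Z_N / Z_0`. -/
theorem stmt_11 {V : Type*} [Fintype V] (N : ℕ)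
    (γ : Fin (N + 1) → V → ℝ) (hγ : ∀ n x, 0 < γ n x)
    (PF : Fin N → V → V → ℝ) (hPF0 : ∀ n x y, 0 ≤ PF n x y)
    (hPFrow : ∀ n x, ∑ y, PF n x y = 1)
    (hpush : ∀ (n : Fin N) (y : V),
      0 < ∑ v, (γ n.castSucc v / ∑ w, γ n.castSucc w) * PF n v y) :
    let Z : Fin (N + 1) → ℝ := fun n => ∑ v, γ n v
    let π : Fin (N + 1) → V → ℝ := fun n v => γ n v / Z n
    let push : Fin N → V → ℝ := fun n y => ∑ v, π n.castSucc v * PF n v y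
    let W : (Fin (N + 1) → V) → ℝ := fun x => ∑ n : Fin N,
      (Real.log (γ n.castSucc (x n.succ) / γ n.succ (x n.succ)) +
        Real.log (push n (x n.succ) / π n.castSucc (x n.succ)))
    (∑ x : Fin (N + 1) → V,
        (π 0 (x 0) * ∏ n : Fin N, PF n (x n.castSucc) (x n.succ)) *
          Real.exp (-W x)) = Z (Fin.last N) / Z 0 :=
  stmt_11_general N γ hγ PF hpush
end

section
/- Let $V$ be a finite set and let $\{R^z\}_{z \in Z}$ be a finite family of rate matrices on $V$ (off-diagonal entries nonnegative, rows summing to zero), together with strictly positive marginal densities $p^z$ on $V$ and weights $w_z \ge 0$ summing over $z$ (for each $x$) as a conditional distribution $w_z(x)$ with $\sum_z w_z(x) = 1$. Suppose for each $z$ the pair $(R^{F,z}, R^{B,z})$ satisfies the detailed-reversal relation $p^z(x) R^{F,z}(x,y) = p^z(y) R^{B,z}(y,x)$ for all $x \neq y$, and suppose $w_z(x) = \alpha_z p^z(x)/p(x)$ where $p(x) = \sum_z \alpha_z p^z(x)$ for nonnegative weights $\alpha_z$ summing to 1. Define the marginal rate matrices $R^F(x,y) = \sum_z w_z(x) R^{F,z}(x,y)$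 and $R^B(x,y) = \sum_z w_z(x) R^{B,z}(x,y)$ for $x \neq y$. Then $p(x) R^F(x,y) = p(y) R^B(y,x)$ for all $x \neq y$. -/
open Finset

/-- Nonnegativity covers the case `∑ a = 0`, where the division is junk: then every `a i` vanishes. -/
theorem Finset.sum_mul_sum_div_sum_mul {ι 𝕜 : Type*} [Field 𝕜] [LinearOrder 𝕜]
    [IsStrictOrderedRing 𝕜] (s : Finset ι) {a : ι → 𝕜} (ha : ∀ i ∈ s, 0 ≤ a i) (r : ι → 𝕜) :
    (∑ i ∈ s, a i) * ∑ i ∈ s, (a i / ∑ j ∈ s, a j) * r i = ∑ i ∈ s, a i * r i := by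
  rcases (sum_nonneg ha).eq_or_lt with hzero | hpos
  · have ha0 := (sum_eq_zero_iff_of_nonneg ha).1 hzero.symm
    rw [← hzero, zero_mul]
    exact (sum_eq_zero fun i hi => by rw [ha0 i hi, zero_mul]).symm
  · rw [mul_sum]
    refine sum_congr rfl fun i _ => ?_
    rw [← mul_assoc, mul_div_cancel₀ _ hpos.ne']

theorem stmt_18_general {V Z : Type*} [Fintype Z]
    (RF RB : Z → V → V → ℝ) (p : Z → V → ℝ) (α : Z → ℝ)
    (hp : ∀ z x, 0 < p z x)
    (hα : ∀ z, 0 ≤ α z)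
    (hrev : ∀ z x y, x ≠ y → p z x * RF z x y = p z y * RB z y x) :
    ∀ x y, x ≠ y →
      (∑ z, α z * p z x) *
          (∑ z, (α z * p z x / ∑ z', α z' * p z' x) * RF z x y) =
        (∑ z, α z * p z y) *
          (∑ z, (α z * p z y / ∑ z', α z' * p z' y) * RB z y x) := by
  intro x y hxy
  have hw : ∀ v z, 0 ≤ α z * p z v := fun v z => mul_nonneg (hα z) (hp z v).le
  rw [sum_mul_sum_div_sum_mul _ (fun z _ => hw x z), sum_mul_sum_div_sum_mul _ (fun z _ => hw y z)]
  refine sum_congr rfl fun z _ => ?_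
  rw [mul_assoc, mul_assoc, hrev z x y hxy]

/-- Marginalization over the posterior of the conditioning variable preserves
the detailed time-reversal relation: if for each `z` the rate matrices
`R^{F,z}, R^{B,z}` are in detailed reversal with respect to `p^z`, then the
marginal rates `R^F(x,y) = ∑_z w_z(x) R^{F,z}(x,y)` and
`R^B(x,y) = ∑_z w_z(x) R^{B,z}(x,y)`, with posterior weights
`w_z(x) = α_z p^z(x)/p(x)` and mixture `p = ∑_z α_z p^z`, satisfy
`p(x) R^F(x,y) = p(y) R^B(y,x)` for `x ≠ y`. -/
theorem stmt_18 {V Z : Type*} [Fintype V] [Fintype Z] [DecidableEq V]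
    (RF RB : Z → V → V → ℝ) (p : Z → V → ℝ) (α : Z → ℝ)
    (hRFnn : ∀ z x y, x ≠ y → 0 ≤ RF z x y)
    (hRFrow : ∀ z x, ∑ y, RF z x y = 0)
    (hRBnn : ∀ z x y, x ≠ y → 0 ≤ RB z x y)
    (hRBrow : ∀ z x, ∑ y, RB z x y = 0)
    (hp : ∀ z x, 0 < p z x)
    (hα : ∀ z, 0 ≤ α z) (hαsum : ∑ z, α z = 1)
    (hrev : ∀ z x y, x ≠ y → p z x * RF z x y = p z y * RB z y x) :
    ∀ x y, x ≠ y →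
      (∑ z, α z * p z x) *
          (∑ z, (α z * p z x / ∑ z', α z' * p z' x) * RF z x y) =
        (∑ z, α z * p z y) *
          (∑ z, (α z * p z y / ∑ z', α z' * p z' y) * RB z y x) :=
  stmt_18_general RF RB p α hp hα hrev
end
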